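/- Let C>0, R>0 be fixed. Define g(c,r) = (c/r)^c ((C-c)/(R-r))^{C-c} for 0<c<C, 0<r<R. If c/r > C/R—that is, the rate inside exceeds the overall rate—then for fixed r, g(c,r) is nondecreasing in c; consequently g(c,r) ≥ (C/R)^C whenever c/r > (C-c)/(R-r). -/

import Mathlib

/-!
Write `L(c) = c log (c / r) + (C - c) log ((C - c) / (R - r))`, so that `g = exp ∘ L`.
Its derivative `log (c / r) - log ((C - c) / (R - r))` is nonnegative exactly when
`(C - c) / (R - r) ≤ c / r`, i.e. when `c` lies above the balanced count `c₀ = r C / R`;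
hence `g` is nondecreasing on `[c₀, C)`, and `g(c₀) = (C / R) ^ C` because both rates equal
`C / R` there.
-/

open Real Set

/-- `a` and `b` are the populations inside and outside the zone, i.e. `r` and `R - r`. -/
noncomputable def scanFactor (C a b c : ℝ) : ℝ := (c / a) ^ c * ((C - c) / b) ^ (C - c)

noncomputable def scanLogFactor (C a b c : ℝ) : ℝ :=
  c * log (c / a) + (C - c) * log ((C - c) / b)

lemma hasDerivAt_mul_log_div {a x : ℝ} (ha : a ≠ 0) (hx : x ≠ 0) :
    HasDerivAt (fun y => y * log (y / a)) (log (x / a) + 1) x := by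
  refine ((hasDerivAt_id' x).fun_mul
    (((hasDerivAt_id' x).div_const a).log (div_ne_zero hx ha))).congr_deriv ?_
  field_simp

lemma hasDerivAt_scanLogFactor {C a b c : ℝ} (ha : a ≠ 0) (hb : b ≠ 0) (hc : c ≠ 0)
    (hcC : c ≠ C) :
    HasDerivAt (scanLogFactor C a b) (log (c / a) - log ((C - c) / b)) c := by
  have hrest := (hasDerivAt_mul_log_div hb (sub_ne_zero.2 hcC.symm)).comp c
    ((hasDerivAt_id c).const_sub C)
  exact ((hasDerivAt_mul_log_div ha hc).add hrest).congr_deriv (by ring)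

lemma exp_scanLogFactor {C a b c : ℝ} (ha : 0 < a) (hb : 0 < b) (hc : 0 < c) (hcC : c < C) :
    exp (scanLogFactor C a b c) = scanFactor C a b c := by
  rw [scanFactor, rpow_def_of_pos (div_pos hc ha), rpow_def_of_pos (div_pos (sub_pos.2 hcC) hb),
    ← exp_add, scanLogFactor, mul_comm (log _), mul_comm (log _)]

lemma mul_div_add_le_iff {C a b c : ℝ} (ha : 0 < a) (hb : 0 < b) :
    a * C / (a + b) ≤ c ↔ (C - c) / b ≤ c / a := by
  rw [div_le_iff₀ (by positivity), div_le_div_iff₀ hb ha]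
  constructor <;> intro h <;> linarith

lemma pos_of_mul_div_add_le {C a b c : ℝ} (ha : 0 < a) (hb : 0 < b)
    (h₀ : a * C / (a + b) ≤ c) (hcC : c < C) : 0 < c := by
  rw [div_le_iff₀ (by positivity)] at h₀
  nlinarith

lemma scanLogFactor_monotoneOn {C a b : ℝ} (ha : 0 < a) (hb : 0 < b) :
    MonotoneOn (scanLogFactor C a b) (Ico (a * C / (a + b)) C) := by
  have hderiv : ∀ c ∈ Ico (a * C / (a + b)) C,
      HasDerivAt (scanLogFactor C a b) (log (c / a) - log ((C - c) / b)) c := fun c hc =>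
    hasDerivAt_scanLogFactor ha.ne' hb.ne' (pos_of_mul_div_add_le ha hb hc.1 hc.2).ne' hc.2.ne
  refine monotoneOn_of_deriv_nonneg (convex_Ico _ _)
    (fun c hc => (hderiv c hc).continuousAt.continuousWithinAt) ?_ ?_
  · rw [interior_Ico]
    exact fun c hc => (hderiv c (Ioo_subset_Ico_self hc)).differentiableAt.differentiableWithinAt
  · rw [interior_Ico]
    intro c hc
    rw [(hderiv c (Ioo_subset_Ico_self hc)).deriv, sub_nonneg]
    exact log_le_log (div_pos (sub_pos.2 hc.2) hb) ((mul_div_add_le_iff ha hb).1 hc.1.le)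

lemma scanFactor_monotoneOn {C a b : ℝ} (ha : 0 < a) (hb : 0 < b) :
    MonotoneOn (scanFactor C a b) (Ico (a * C / (a + b)) C) :=
  (exp_monotone.comp_monotoneOn (scanLogFactor_monotoneOn ha hb)).congr fun _ hc =>
    exp_scanLogFactor ha hb (pos_of_mul_div_add_le ha hb hc.1 hc.2) hc.2

lemma scanFactor_mul_div_add {C a b : ℝ} (hC : 0 < C) (ha : 0 < a) (hb : 0 < b) :
    scanFactor C a b (a * C / (a + b)) = (C / (a + b)) ^ C := by
  have hin : a * C / (a + b) / a = C / (a + b) := by field_simp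
  have hout : (C - a * C / (a + b)) / b = C / (a + b) := by field_simp; ring
  rw [scanFactor, hin, hout, ← rpow_add (by positivity), add_sub_cancel]

theorem scan_factor_monotone_and_ge_general (C R : ℝ) :
    (∀ r : ℝ, 0 < r → r < R →
      MonotoneOn (fun c : ℝ => (c / r) ^ c * ((C - c) / (R - r)) ^ (C - c))
        {c : ℝ | 0 < c ∧ c < C ∧ C / R < c / r})
    ∧ ∀ c r : ℝ, 0 < c → c < C → 0 < r → r < R →
        (C - c) / (R - r) < c / r →
        (C / R) ^ C ≤ (c / r) ^ c * ((C - c) / (R - r)) ^ (C - c) := by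
  refine ⟨fun r hr hrR => ?_, fun c r hc hcC hr hrR hlt => ?_⟩
  · have hR : 0 < R := hr.trans hrR
    refine (scanFactor_monotoneOn (C := C) hr (sub_pos.2 hrR)).mono
      fun c ⟨_, hcC, hrate⟩ => ⟨?_, hcC⟩
    rw [add_sub_cancel, div_le_iff₀ hR]
    rw [div_lt_div_iff₀ hR hr] at hrate
    linarith
  · have hb : 0 < R - r := sub_pos.2 hrR
    have h₀ : r * C / (r + (R - r)) ≤ c := (mul_div_add_le_iff hr hb).2 hlt.le
    have hmono := scanFactor_monotoneOn hr hb ⟨le_rfl, h₀.trans_lt hcC⟩ ⟨h₀, hcC⟩ h₀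
    rwa [scanFactor_mul_div_add (hc.trans hcC) hr hb, add_sub_cancel] at hmono

/-- The scan likelihood factor g(c, r) = (c/r)^c ((C-c)/(R-r))^{C-c}, 0<c<C, 0<r<R.
    For fixed r, g is nondecreasing in c on the set where c/r > C/R, and
    g(c, r) ≥ (C/R)^C whenever c/r > (C-c)/(R-r). -/
theorem scan_factor_monotone_and_ge (C R : ℝ) (hC : 0 < C) (hR : 0 < R) :
    (∀ r : ℝ, 0 < r → r < R →
      MonotoneOn (fun c : ℝ => (c / r) ^ c * ((C - c) / (R - r)) ^ (C - c))
        {c : ℝ | 0 < c ∧ c < C ∧ C / R < c / r})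
    ∧ ∀ c r : ℝ, 0 < c → c < C → 0 < r → r < R →
        (C - c) / (R - r) < c / r →
        (C / R) ^ C ≤ (c / r) ^ c * ((C - c) / (R - r)) ^ (C - c) :=
  scan_factor_monotone_and_ge_general C R
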